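/- Let n ≥ 2 and let K_{n−1} be the poset [n−1] ⊕ ([1] ⊔ [1]) ⊕ [n−1] with rank-level lower sets L_0, …, L_{2n−1} and the two extra lower sets I_n and I_{n′}. Fix m ≥ 1, n_0 ∈ ℕ, n_1, …, n_s ∈ ℙ, m_0, …, m_t ∈ ℙ with n_0 + ⋯ + n_s + m_0 + ⋯ + m_t = m, and indices 0 ≤ j_t < ⋯ < j_1 < n ≤ i_s < ⋯ < i_1 < 2n−1. Then the reverse operator 𝔛 of [m] × K_{n−1} satisfies: 𝔛(L_{2n−1}^{n_0}, L_{i_1}^{n_1}, …, L_{i_s}^{n_s}, I_n^{m_0}, L_{j_1}^{m_1}, …, L_{j_t}^{m_t}) equals (L_{i_1+1}^{n_0+1}, L_{i_2+1}^{n_1}, …, L_{i_s+1}^{n_{s−1}}, I_{n′}^{n_s}, L_{j_1+1}^{m_0}, L_{j_2+1}^{m_1}, …, L_{j_t+1}^{m_{t−1}}, L_0^{m_t−1}) if j_1 < n−1, and equals (L_{i_1+1}^{n_0+1}, L_{i_2+1}^{n_1}, …, L_{i_s+1}^{n_{s−1}}, L_n^{n_s}, I_n^{m_0}, L_{j_2+1}^{m_1},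 …, L_{j_t+1}^{m_{t−1}}, L_0^{m_t−1}) if j_1 = n−1. -/

import Mathlib

/-- The reverse operator `𝔛` on lower sets of a poset: the lower set generated by
the minimal elements of the complement. -/
def XRev {α : Type*} [PartialOrder α] (I : Set α) : Set α :=
  {x | ∃ y, Minimal (fun z => z ∈ Iᶜ) y ∧ x ≤ y}

/-- The poset `K_{n-1} = [n-1] ⊕ ([1] ⊔ [1]) ⊕ [n-1]`, realized as pairs
`(rank, tag)` with `1 ≤ rank ≤ 2n-1`, where only rank `n` carries two elements
(tags `false` for `n` and `true` for `n′`). -/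
def KType (n : ℕ) : Type :=
  {p : ℕ × Bool // 1 ≤ p.1 ∧ p.1 ≤ 2 * n - 1 ∧ (p.1 ≠ n → p.2 = false)}

/-- In `K_{n-1}`, `x ≤ y` iff `x = y` or `x` has strictly smaller rank. -/
instance (n : ℕ) : PartialOrder (KType n) where
  le x y := x = y ∨ x.1.1 < y.1.1
  le_refl x := Or.inl rfl
  le_trans x y z hxy hyz := by
    rcases hxy with rfl | h
    · exact hyz
    · rcases hyz with rfl | h'
      · exact Or.inr h
      · exact Or.inr (h.trans h')
  le_antisymm x y hxy hyx := by
    rcases hxy with rfl | h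
    · rfl
    · rcases hyx with rfl | h'
      · rfl
      · omega

/-- The rank-level lower set `L_j` of `K_{n-1}`. -/
def KL (n : ℕ) (j : ℕ) : Set (KType n) := {x | x.1.1 ≤ j}

/-- The lower set `I_n = {1, …, n-1, n}` of `K_{n-1}`. -/
def KIn (n : ℕ) : Set (KType n) := {x | x.1.1 < n ∨ x.1 = (n, false)}

/-- The lower set `I_{n′} = {1, …, n-1, n′}` of `K_{n-1}`. -/
def KIn' (n : ℕ) : Set (KType n) := {x | x.1.1 < n ∨ x.1 = (n, true)}

/-!
A lower set of `[m] × Q` is the list of its slices, and its reverse is generated by the pairs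
`(b, y)` with `y` minimal outside slice `b` but inside every earlier slice. Hence slice `a` of the
reverse is the union, over `b ≥ a`, of the lower sets generated by such `y`, and only the first
index of each constant block contributes. In `K_{n-1}` the block `L_r` after `L_j` (`r < j`)
contributes `L_{r+1}`, the block `I_n` after `L_i` (`n ≤ i`) contributes `I_{n′}`, and `L_j` after
`I_n` contributes `I_n ∩ L_{j+1}`, which is `L_{j+1}` or, when `j = n-1`, `I_n`. Taking the unions
moves every contribution one block to the left; the only non-trivial union is
`I_{n′} ∪ I_n = L_n`.
-/

theorem List.length_flatMap_range_replicate {α : Type*} (s : ℕ) (c : ℕ → ℕ) (f : ℕ → α) :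
    ((List.range s).flatMap fun k => List.replicate (c k) (f k)).length =
      ∑ k ∈ Finset.range s, c k := by
  simp [List.length_flatMap, Finset.sum_eq_multiset_sum, Multiset.range]

theorem List.getD_append_replicate_default {α : Type*} (l : List α) (c i : ℕ) (d : α) :
    (l ++ List.replicate c d).getD i d = l.getD i d := by
  rcases lt_or_ge i l.length with h | h
  · exact List.getD_append _ _ _ _ h
  · rw [List.getD_append_right _ _ _ _ h, List.getD_eq_default _ _ h]
    simp [List.getD_eq_getElem?_getD]

section ReverseOperator

variable {Q : Type*} [PartialOrder Q]

def XRevFrom (P S : Set Q) : Set Q := {x | ∃ y ∈ P, Minimal (· ∈ Sᶜ) y ∧ x ≤ y}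

/-- Slice `a` of `XRevList P L` is the union over `b ≥ a` of the `XRevFrom` of slice `b` inside
`P` and all earlier slices (`mem_XRevList_getD`). The final `∅` stands for the slice past the end,
so that the list is never empty. -/
def XRevList : Set Q → List (Set Q) → List (Set Q)
  | _, [] => [∅]
  | P, S :: L => (XRevFrom P S ∪ (XRevList (P ∩ S) L).getD 0 ∅) :: XRevList (P ∩ S) L

theorem XRevFrom_self (S : Set Q) : XRevFrom S S = ∅ :=
  Set.eq_empty_of_forall_notMem fun _ ⟨_, hyS, hmin, _⟩ => hmin.prop hyS

theorem minimal_compl_prod_iff {m : ℕ} {F : ℕ → Set Q} (hF : ∀ a, IsLowerSet (F a))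
    {b : Fin m} {y : Q} :
    Minimal (· ∈ {p : Fin m × Q | p.2 ∈ F p.1}ᶜ) (b, y) ↔
      Minimal (· ∈ (F b)ᶜ) y ∧ ∀ b' < (b : ℕ), y ∈ F b' := by
  constructor
  · intro h
    refine ⟨⟨h.prop, fun y' hy' hle => ?_⟩, fun b' hb' => ?_⟩
    · exact (Prod.mk_le_mk.1 (h.2 (y := (b, y')) hy' (Prod.mk_le_mk.2 ⟨le_rfl, hle⟩))).2
    · by_contra hy
      have := (Prod.mk_le_mk.1 (h.2 (y := (⟨b', hb'.trans b.isLt⟩, y)) hy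
        (Prod.mk_le_mk.2 ⟨Fin.le_def.2 hb'.le, le_rfl⟩))).1
      exact absurd (Fin.le_def.1 this) (by simpa using hb')
  · rintro ⟨hmin, hprev⟩
    refine ⟨hmin.prop, fun ⟨b', y'⟩ hy' hle => ?_⟩
    obtain ⟨hb, hy⟩ := Prod.mk_le_mk.1 hle
    rcases (Fin.le_def.1 hb).lt_or_eq with hlt | heq
    · exact absurd (hF b' hy (hprev b' hlt)) hy'
    · cases Fin.ext heq
      exact Prod.mk_le_mk.2 ⟨le_rfl, hmin.2 hy' hy⟩

theorem mem_XRev_prod {m : ℕ} {F : ℕ → Set Q} (hF : ∀ a, IsLowerSet (F a)) {a : Fin m} {x : Q} :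
    (a, x) ∈ XRev {p : Fin m × Q | p.2 ∈ F p.1} ↔
      ∃ b < m, (a : ℕ) ≤ b ∧ ∃ y, Minimal (· ∈ (F b)ᶜ) y ∧ (∀ b' < b, y ∈ F b') ∧ x ≤ y := by
  constructor
  · rintro ⟨⟨b, y⟩, hmin, hle⟩
    obtain ⟨hmin, hprev⟩ := (minimal_compl_prod_iff hF).1 hmin
    exact ⟨b, b.isLt, Fin.le_def.1 (Prod.mk_le_mk.1 hle).1, y, hmin, hprev, (Prod.mk_le_mk.1 hle).2⟩
  · rintro ⟨b, hbm, hab, y, hmin, hprev, hxy⟩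
    exact ⟨(⟨b, hbm⟩, y), (minimal_compl_prod_iff hF).2 ⟨hmin, hprev⟩,
      Prod.mk_le_mk.2 ⟨Fin.le_def.2 hab, hxy⟩⟩

theorem mem_XRevList_getD {P : Set Q} {L : List (Set Q)} {a : ℕ} {x : Q} :
    x ∈ (XRevList P L).getD a ∅ ↔
      ∃ b < L.length, a ≤ b ∧ ∃ y ∈ P, Minimal (· ∈ (L.getD b ∅)ᶜ) y ∧
        (∀ b' < b, y ∈ L.getD b' ∅) ∧ x ≤ y := by
  induction L generalizing P a with
  | nil => cases a <;> simp [XRevList]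
  | cons S L ih =>
    have shift : ∀ b, (∃ y ∈ P, Minimal (· ∈ ((S :: L).getD (b + 1) ∅)ᶜ) y ∧
          (∀ b' < b + 1, y ∈ (S :: L).getD b' ∅) ∧ x ≤ y) ↔
        ∃ y ∈ P ∩ S, Minimal (· ∈ (L.getD b ∅)ᶜ) y ∧ (∀ b' < b, y ∈ L.getD b' ∅) ∧ x ≤ y := by
      intro b
      simp only [List.getD_cons_succ, Nat.forall_lt_succ_left, List.getD_cons_zero,
        Set.mem_inter_iff]
      grind
    cases a with
    | zero =>
      simp only [XRevList, List.getD_cons_zero, Set.mem_union, ih, List.length_cons,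
        Nat.exists_lt_succ_left, shift]
      simp [XRevFrom]
    | succ a =>
      rw [XRevList, List.getD_cons_succ, ih]
      simp only [List.length_cons, Nat.exists_lt_succ_left, shift]
      simp

theorem XRev_prod_eq {m : ℕ} {L : List (Set Q)} (hL : ∀ S ∈ L, IsLowerSet S)
    (hm : L.length = m) :
    XRev {p : Fin m × Q | p.2 ∈ L.getD p.1 ∅} =
      {p | p.2 ∈ (XRevList Set.univ L).getD p.1 ∅} := by
  have hF : ∀ a, IsLowerSet (L.getD a ∅) := fun a => by
    rcases lt_or_ge a L.length with h | h
    · rw [List.getD_eq_getElem _ _ h]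
      exact hL _ (List.getElem_mem h)
    · rw [List.getD_eq_default _ _ h]
      exact isLowerSet_empty
  ext ⟨a, x⟩
  simp only [mem_XRev_prod hF, Set.mem_ofPred_eq, mem_XRevList_getD, Set.mem_univ, true_and, hm]

theorem XRevList_replicate_self_append {S H : Set Q} {L T : List (Set Q)}
    (h : XRevList S L = H :: T) (c : ℕ) :
    XRevList S (List.replicate c S ++ L) = List.replicate c H ++ H :: T := by
  induction c with
  | zero => simpa
  | succ c ih =>
    rw [List.replicate_succ, List.cons_append, XRevList, Set.inter_self, ih, XRevFrom_self,
      Set.empty_union]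
    cases c <;> simp [List.replicate_succ]

theorem XRevList_replicate_append {P S H : Set Q} {L T : List (Set Q)} (hSP : S ⊆ P)
    (h : XRevList S L = H :: T) {c : ℕ} (hc : c ≠ 0) :
    XRevList P (List.replicate c S ++ L) = (XRevFrom P S ∪ H) :: (List.replicate c H ++ T) := by
  obtain ⟨c, rfl⟩ := Nat.exists_eq_add_one_of_ne_zero hc
  rw [List.replicate_succ, List.cons_append, XRevList, Set.inter_eq_right.2 hSP,
    XRevList_replicate_self_append h, List.replicate_succ', List.append_assoc,
    List.singleton_append]
  cases c <;> rfl

end ReverseOperator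

section KPoset

variable {n : ℕ}

theorem KType.rank_le_of_le {x y : KType n} (h : x ≤ y) : x.1.1 ≤ y.1.1 := by
  rcases h with rfl | h
  exacts [le_rfl, h.le]

theorem KL_top : KL n (2 * n - 1) = Set.univ :=
  Set.eq_univ_of_forall fun x => x.2.2.1

theorem KL_zero : KL n 0 = ∅ :=
  Set.eq_empty_of_forall_notMem fun x (hx : x.1.1 ≤ 0) => by have := x.2.1; omega

theorem KL_mono : Monotone (KL n) :=
  fun _ _ h _ hx => le_trans hx h

theorem isLowerSet_KL (j : ℕ) : IsLowerSet (KL n j) :=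
  fun _ _ h hx => (KType.rank_le_of_le h).trans hx

theorem isLowerSet_KIn : IsLowerSet (KIn n) := by
  rintro x y (rfl | hlt) hx
  · exact hx
  · left
    rcases hx with hx | hx
    · omega
    · rw [hx] at hlt
      exact hlt

theorem minimal_compl_KL_iff {j : ℕ} {y : KType n} :
    Minimal (· ∈ (KL n j)ᶜ) y ↔ y.1.1 = j + 1 := by
  simp only [Set.mem_compl_iff, KL, Set.mem_ofPred_eq, not_le]
  constructor
  · intro h
    have hjy : j < y.1.1 := h.prop
    have hy := y.2.2.1
    by_contra hne
    have : y.1.1 ≤ j + 1 := KType.rank_le_of_le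
      (h.2 (y := ⟨(j + 1, false), by omega, by omega, fun _ => rfl⟩) (by simp)
        (Or.inr (show j + 1 < y.1.1 by omega)))
    omega
  · intro h
    refine ⟨by omega, fun y' hy' hle => ?_⟩
    rcases hle with rfl | hlt
    · exact le_rfl
    · omega

theorem minimal_compl_KIn_iff {y : KType n} :
    Minimal (· ∈ (KIn n)ᶜ) y ↔ y.1 = (n, true) := by
  constructor
  · intro h
    obtain ⟨hge, hne⟩ : n ≤ y.1.1 ∧ y.1 ≠ (n, false) := by simpa [KIn] using h.prop
    have hy := y.2.2.1
    have hrank : y.1.1 = n := by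
      by_contra hgt
      have : y.1.1 ≤ n := KType.rank_le_of_le
        (h.2 (y := ⟨(n, true), by omega, by omega, fun h => absurd rfl h⟩)
          (fun h : n < n ∨ (n, true) = (n, false) => by simp at h)
          (Or.inr (show n < y.1.1 by omega)))
      omega
    refine Prod.ext hrank ?_
    cases hb : y.1.2
    · exact absurd (Prod.ext hrank hb) hne
    · rfl
  · intro h
    refine ⟨by simp [KIn, h], fun y' hy' hle => ?_⟩
    rcases hle with rfl | hlt
    · exact le_rfl
    · exact absurd (Or.inl (by rw [h] at hlt; exact hlt)) hy'

theorem XRevFrom_KL {P : Set (KType n)} (hP : IsLowerSet P) {r : ℕ}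
    (hr : ∃ y ∈ P, y.1.1 = r + 1) : XRevFrom P (KL n r) = P ∩ KL n (r + 1) := by
  ext x
  simp only [XRevFrom, minimal_compl_KL_iff, Set.mem_inter_iff, Set.mem_ofPred_eq]
  constructor
  · rintro ⟨y, hyP, hy, hxy⟩
    exact ⟨hP hxy hyP, show x.1.1 ≤ r + 1 from hy ▸ KType.rank_le_of_le hxy⟩
  · rintro ⟨hxP, hx : x.1.1 ≤ r + 1⟩
    rcases hx.lt_or_eq with hlt | heq
    · obtain ⟨y, hyP, hy⟩ := hr
      exact ⟨y, hyP, hy, Or.inr (hy ▸ hlt)⟩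
    · exact ⟨x, hxP, heq, le_rfl⟩

theorem XRevFrom_KL_KL {j r : ℕ} (hrj : r < j) (hj : j ≤ 2 * n - 1) :
    XRevFrom (KL n j) (KL n r) = KL n (r + 1) := by
  rw [XRevFrom_KL (isLowerSet_KL j) ⟨⟨(r + 1, false), by omega, by omega, fun _ => rfl⟩, hrj, rfl⟩,
    Set.inter_eq_right.2 (KL_mono hrj)]

theorem XRevFrom_KIn_KL {j : ℕ} (hj : j < n) : XRevFrom (KIn n) (KL n j) = KIn n ∩ KL n (j + 1) :=
  XRevFrom_KL isLowerSet_KIn ⟨⟨(j + 1, false), by omega, by omega, fun _ => rfl⟩, by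
    rcases (Nat.succ_le_of_lt hj).lt_or_eq with h | h
    exacts [Or.inl h, Or.inr (by simpa using h)], rfl⟩

theorem XRevFrom_KL_KIn {i : ℕ} (hi : n ≤ i) : XRevFrom (KL n i) (KIn n) = KIn' n := by
  ext x
  simp only [XRevFrom, minimal_compl_KIn_iff]
  constructor
  · rintro ⟨y, -, hy, hxy⟩
    rcases hxy with rfl | hlt
    · exact Or.inr hy
    · left
      rw [hy] at hlt
      exact hlt
  · intro hx
    have := x.2.1
    have := x.2.2.1
    refine ⟨⟨(n, true), by omega, by omega, fun h => absurd rfl h⟩, show n ≤ i from hi, rfl, ?_⟩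
    rcases hx with hlt | heq
    · exact Or.inr hlt
    · exact Or.inl (Subtype.ext heq)

theorem KL_subset_KIn {j : ℕ} (hj : j < n) : KL n j ⊆ KIn n :=
  fun _ hx => Or.inl (lt_of_le_of_lt hx hj)

theorem KIn_subset_KL {i : ℕ} (hi : n ≤ i) : KIn n ⊆ KL n i := by
  rintro x (hx | hx)
  · exact (show x.1.1 ≤ i by omega)
  · exact (show x.1.1 ≤ i by rw [hx]; exact hi)

theorem KIn'_subset_KL {i : ℕ} (hi : n ≤ i) : KIn' n ⊆ KL n i := by
  rintro x (hx | hx)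
  · exact (show x.1.1 ≤ i by omega)
  · exact (show x.1.1 ≤ i by rw [hx]; exact hi)

theorem KL_subset_KIn' {j : ℕ} (hj : j < n) : KL n j ⊆ KIn' n :=
  fun _ hx => Or.inl (lt_of_le_of_lt hx hj)

theorem KIn'_union_KIn : KIn' n ∪ KIn n = KL n n := by
  ext x
  show (x.1.1 < n ∨ x.1 = (n, true)) ∨ (x.1.1 < n ∨ x.1 = (n, false)) ↔ x.1.1 ≤ n
  obtain ⟨⟨k, b⟩, hk⟩ := x
  cases b <;> simp only [Prod.mk.injEq, Bool.false_eq_true, Bool.true_eq_false, and_true, and_false,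
    or_false, or_self_left] <;> omega

theorem XRevList_KL_blocks {t : ℕ} {r c : ℕ → ℕ} {P H : Set (KType n)}
    {Rest T : List (Set (KType n))}
    (hr : ∀ k < t, r (k + 1) < r k) (hr0 : r 0 ≤ 2 * n - 1) (hc : ∀ k ≤ t, c k ≠ 0)
    (hP : KL n (r 0) ⊆ P) (hPC : KL n (r 0) ⊆ XRevFrom P (KL n (r 0)))
    (hRest : XRevList (KL n (r t)) Rest = H :: T) (hH : H ⊆ KL n (r t)) :
    XRevList P ((List.range (t + 1)).flatMap (fun k => List.replicate (c k) (KL n (r k))) ++ Rest) =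
      XRevFrom P (KL n (r 0)) ::
        ((List.range t).flatMap (fun k => List.replicate (c k) (KL n (r (k + 1) + 1))) ++
          List.replicate (c t) H ++ T) := by
  induction t generalizing r c P with
  | zero =>
    rw [List.range_one, List.flatMap_singleton, XRevList_replicate_append hP hRest (hc 0 le_rfl),
      Set.union_eq_left.2 (hH.trans hPC)]
    simp
  | succ t ih =>
    have hnext := ih (r := fun k => r (k + 1)) (c := fun k => c (k + 1))
      (fun k hk => hr (k + 1) (by omega)) ((hr 0 (by omega)).le.trans hr0)
      (fun k hk => hc (k + 1) (by omega)) (KL_mono (hr 0 (by omega)).le)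
      (by rw [XRevFrom_KL_KL (hr 0 (by omega)) hr0]; exact KL_mono (Nat.le_succ _)) hRest hH
    rw [XRevFrom_KL_KL (hr 0 (by omega)) hr0] at hnext
    rw [List.range_succ_eq_map, List.flatMap_cons, List.flatMap_map, List.append_assoc,
      XRevList_replicate_append hP hnext (hc 0 (by omega)),
      Set.union_eq_left.2 ((KL_mono (hr 0 (by omega))).trans hPC)]
    simp [List.range_succ_eq_map, List.flatMap_map]

theorem XRevList_KType_slices {n₀ s t : ℕ} {nn mm ii jj : ℕ → ℕ}
    (hnn : ∀ k ≤ s, nn k ≠ 0) (hmm : ∀ k ≤ t + 1, mm k ≠ 0)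
    (hii : ∀ k < s, ii (k + 1) < ii k) (hjj : ∀ k < t, jj (k + 1) < jj k)
    (hi1 : ii 0 < 2 * n - 1) (his : n ≤ ii s) (hj1 : jj 0 < n) :
    XRevList Set.univ (List.replicate n₀ (KL n (2 * n - 1)) ++
        (List.range (s + 1)).flatMap (fun k => List.replicate (nn k) (KL n (ii k))) ++
        List.replicate (mm 0) (KIn n) ++
        (List.range (t + 1)).flatMap (fun k => List.replicate (mm (k + 1)) (KL n (jj k)))) =
      List.replicate (n₀ + 1) (KL n (ii 0 + 1)) ++
        (List.range s).flatMap (fun k => List.replicate (nn k) (KL n (ii (k + 1) + 1))) ++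
        List.replicate (nn s) (KIn' n ∪ (KIn n ∩ KL n (jj 0 + 1))) ++
        List.replicate (mm 0) (KIn n ∩ KL n (jj 0 + 1)) ++
        (List.range t).flatMap (fun k => List.replicate (mm (k + 1)) (KL n (jj (k + 1) + 1))) ++
        List.replicate (mm (t + 1)) ∅ := by
  have hJ := XRevList_KL_blocks (P := KIn n) (c := fun k => mm (k + 1)) (Rest := []) hjj
    (by omega) (fun k hk => hmm (k + 1) (by omega)) (KL_subset_KIn hj1)
    (by rw [XRevFrom_KIn_KL hj1]; exact Set.subset_inter (KL_subset_KIn hj1) (KL_mono le_self_add))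
    rfl (Set.empty_subset _)
  rw [XRevFrom_KIn_KL hj1, List.append_nil, List.append_nil] at hJ
  have hI := XRevList_replicate_append (KIn_subset_KL his) hJ (hmm 0 (by omega))
  rw [XRevFrom_KL_KIn his] at hI
  have hII := XRevList_KL_blocks (P := KL n (2 * n - 1)) hii hi1.le hnn (KL_mono hi1.le)
    (by rw [XRevFrom_KL_KL hi1 le_rfl]; exact KL_mono le_self_add) hI
    (Set.union_subset (KIn'_subset_KL his) (Set.inter_subset_left.trans (KIn_subset_KL his)))
  rw [XRevFrom_KL_KL hi1 le_rfl] at hII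
  rw [← KL_top, List.append_assoc, List.append_assoc, List.append_assoc,
    XRevList_replicate_self_append hII]
  simp [List.replicate_succ', List.append_assoc]

end KPoset

/-- Indices are 0-based: `ii k = i_{k+1}`, `nn k = n_{k+1}`, `jj k = j_{k+1}`, `mm k = m_k`, and a
lower set of `[m] × K_{n-1}` is given by the list of its `m` slices. -/
theorem stmt4 (n : ℕ) (m : ℕ)
    (s t : ℕ) (hs : 1 ≤ s) (ht : 1 ≤ t)
    (n₀ : ℕ) (nn mm : ℕ → ℕ)
    (hnn : ∀ k, k < s → 1 ≤ nn k) (hmm : ∀ k, k ≤ t → 1 ≤ mm k)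
    (ii jj : ℕ → ℕ)
    (hii : ∀ k, k + 1 < s → ii (k + 1) < ii k)
    (hjj : ∀ k, k + 1 < t → jj (k + 1) < jj k)
    (hi1 : ii 0 < 2 * n - 1) (his : n ≤ ii (s - 1)) (hj1 : jj 0 < n)
    (hsum : n₀ + (∑ k ∈ Finset.range s, nn k) + (∑ k ∈ Finset.range (t + 1), mm k) = m) :
    (jj 0 < n - 1 →
      XRev {p : Fin m × KType n | p.2 ∈
          (List.replicate n₀ (KL n (2 * n - 1)) ++
            ((List.range s).flatMap fun k => List.replicate (nn k) (KL n (ii k))) ++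
            List.replicate (mm 0) (KIn n) ++
            ((List.range t).flatMap fun k =>
              List.replicate (mm (k + 1)) (KL n (jj k)))).getD p.1 ∅}
        = {p : Fin m × KType n | p.2 ∈
          (List.replicate (n₀ + 1) (KL n (ii 0 + 1)) ++
            ((List.range (s - 1)).flatMap fun k =>
              List.replicate (nn k) (KL n (ii (k + 1) + 1))) ++
            List.replicate (nn (s - 1)) (KIn' n) ++
            List.replicate (mm 0) (KL n (jj 0 + 1)) ++
            ((List.range (t - 1)).flatMap fun k =>
              List.replicate (mm (k + 1)) (KL n (jj (k + 1) + 1))) ++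
            List.replicate (mm t - 1) (KL n 0)).getD p.1 ∅}) ∧
    (jj 0 = n - 1 →
      XRev {p : Fin m × KType n | p.2 ∈
          (List.replicate n₀ (KL n (2 * n - 1)) ++
            ((List.range s).flatMap fun k => List.replicate (nn k) (KL n (ii k))) ++
            List.replicate (mm 0) (KIn n) ++
            ((List.range t).flatMap fun k =>
              List.replicate (mm (k + 1)) (KL n (jj k)))).getD p.1 ∅}
        = {p : Fin m × KType n | p.2 ∈
          (List.replicate (n₀ + 1) (KL n (ii 0 + 1)) ++
            ((List.range (s - 1)).flatMap fun k =>
              List.replicate (nn k) (KL n (ii (k + 1) + 1))) ++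
            List.replicate (nn (s - 1)) (KL n n) ++
            List.replicate (mm 0) (KIn n) ++
            ((List.range (t - 1)).flatMap fun k =>
              List.replicate (mm (k + 1)) (KL n (jj (k + 1) + 1))) ++
            List.replicate (mm t - 1) (KL n 0)).getD p.1 ∅}) := by
  obtain ⟨s, rfl⟩ : ∃ s', s = s' + 1 := ⟨s - 1, by omega⟩
  obtain ⟨t, rfl⟩ : ∃ t', t = t' + 1 := ⟨t - 1, by omega⟩
  simp only [Nat.add_sub_cancel] at his ⊢
  rw [XRev_prod_eq ?lower ?length,
    XRevList_KType_slices (fun k hk => Nat.one_le_iff_ne_zero.1 (hnn k (by omega)))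
      (fun k hk => Nat.one_le_iff_ne_zero.1 (hmm k hk)) (fun k hk => hii k (by omega))
      (fun k hk => hjj k (by omega)) hi1 his hj1]
  case lower =>
    intro S hS
    simp only [List.mem_append, List.mem_flatMap, List.mem_replicate] at hS
    rcases hS with ((⟨-, rfl⟩ | ⟨k, -, -, rfl⟩) | ⟨-, rfl⟩) | ⟨k, -, -, rfl⟩
    exacts [isLowerSet_KL _, isLowerSet_KL _, isLowerSet_KIn, isLowerSet_KL _]
  case length =>
    rw [Finset.sum_range_succ' mm] at hsum
    simp only [List.length_append, List.length_replicate, List.length_flatMap_range_replicate]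
    omega
  refine ⟨fun hj => ?_, fun hj => ?_⟩ <;> simp only [KL_zero, List.getD_append_replicate_default]
  · have hj' : jj 0 + 1 < n := by omega
    rw [Set.inter_eq_right.2 (KL_subset_KIn hj'), Set.union_eq_left.2 (KL_subset_KIn' hj')]
  · rw [show jj 0 + 1 = n by omega, Set.inter_eq_left.2 (KIn_subset_KL le_rfl), KIn'_union_KIn]
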